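/- arXiv:1503.06903 — 3 statements merged into one kernel-verified Lean document; each statement's English description precedes it below -/
import Mathlib

section
/- The Read–Bajraktarević operator T : C_{y0,yN}(I) → C_{y0,yN}(I) defined by (Tg)(x) = F_i(L_i^{-1}(x), g(L_i^{-1}(x))) for x ∈ [x_{i-1}, x_i], i = 1,…,N, is well-defined and is a contraction with contraction factor s = max{s_i : i = 1,…,N} < 1; its unique fixed point f is a continuous function on I satisfying f(x_j) = y_j for j = 0,1,…,N and the functional equation f(L_i(x)) = F_i(x, f(x)) for all x ∈ I and i = 1,…,N. -/
/-!
On the closed set of continuous functions on `[x₀, x_N]` with the prescribed end values, the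
Read–Bajraktarević operator is a contraction for the sup metric: on the piece `[x_{i-1}, x_i]`
it only changes the second argument of `F_i`, which is `s_i`-Lipschitz. Banach's theorem gives
the fixed point `f`, and `T f = f` read at `L_i(t)` is the functional equation
`f(L_i t) = F_i(t, f t)`; at `t = x₀` it gives `f(x_{i-1}) = F_i(x₀, y₀) = y_{i-1}`.
-/

open Set

section Knots

variable {x : ℕ → ℝ} {n : ℕ}

lemma le_of_le_succ_of_le (hx : ∀ i < n, x i ≤ x (i + 1)) {i j : ℕ} (hij : i ≤ j) (hj : j ≤ n) :
    x i ≤ x j := by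
  induction j, hij using Nat.le_induction with
  | base => exact le_rfl
  | succ k _ ih => exact (ih (by omega)).trans (hx k (by omega))

lemma Icc_succ_subset_Icc (hx : ∀ i < n, x i ≤ x (i + 1)) {i : ℕ} (hi : i < n) :
    Icc (x i) (x (i + 1)) ⊆ Icc (x 0) (x n) :=
  Icc_subset_Icc (le_of_le_succ_of_le hx (Nat.zero_le i) hi.le) (le_of_le_succ_of_le hx hi le_rfl)

lemma exists_mem_Icc_succ (hx : ∀ i < n, x i ≤ x (i + 1)) (hn : 0 < n) {t : ℝ}
    (ht : t ∈ Icc (x 0) (x n)) : ∃ i < n, t ∈ Icc (x i) (x (i + 1)) := by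
  induction n with
  | zero => omega
  | succ k ih =>
    rcases k.eq_zero_or_pos with rfl | hk
    · exact ⟨0, Nat.one_pos, ht⟩
    by_cases htk : t ≤ x k
    · obtain ⟨i, hi, hti⟩ := ih (fun i hi => hx i (by omega)) hk ⟨ht.1, htk⟩
      exact ⟨i, by omega, hti⟩
    · exact ⟨k, k.lt_succ_self, (not_le.1 htk).le, ht.2⟩

lemma continuousOn_Icc_of_forall_Icc_succ {β : Type*} [TopologicalSpace β] {f : ℝ → β}
    (hx : ∀ i < n, x i ≤ x (i + 1)) (hf : ∀ i < n, ContinuousOn f (Icc (x i) (x (i + 1)))) :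
    ContinuousOn f (Icc (x 0) (x n)) := by
  induction n with
  | zero => simpa only [Icc_self] using continuousOn_singleton f (x 0)
  | succ k ih =>
    rw [← Icc_union_Icc_eq_Icc (le_of_le_succ_of_le hx (Nat.zero_le k) k.le_succ)
      (hx k k.lt_succ_self)]
    exact (ih (fun i hi => hx i (by omega)) (fun i hi => hf i (by omega))).union_of_isClosed
      (hf k k.lt_succ_self) isClosed_Icc isClosed_Icc

end Knots

/-- Membership in the paper's `C_{ya,yb}([a,b])`. -/
def PinnedContinuousOn (a b ya yb : ℝ) (g : ℝ → ℝ) : Prop :=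
  ContinuousOn g (Icc a b) ∧ g a = ya ∧ g b = yb

lemma exists_pinnedContinuousOn {a b : ℝ} (hab : a < b) (ya yb : ℝ) :
    ∃ g, PinnedContinuousOn a b ya yb g := by
  refine ⟨fun t => ya + (t - a) / (b - a) * (yb - ya), by fun_prop, by simp, ?_⟩
  simp [div_self (sub_ne_zero.2 hab.ne')]

lemma ciSup_abs_sub_le_mul_ciSup {a b K : ℝ} (hab : a ≤ b) {g h G H : ℝ → ℝ}
    (hg : ContinuousOn g (Icc a b)) (hh : ContinuousOn h (Icc a b))
    (hGH : ∀ C, (∀ u ∈ Icc a b, |g u - h u| ≤ C) → ∀ t ∈ Icc a b, |G t - H t| ≤ K * C) :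
    (⨆ t : Icc a b, |G t - H t|) ≤ K * ⨆ t : Icc a b, |g t - h t| := by
  have : Nonempty (Icc a b) := (nonempty_Icc.2 hab).to_subtype
  have hbdd : BddAbove (range fun t : Icc a b => |g t - h t|) := by
    rw [← image_eq_range (fun t => |g t - h t|) (Icc a b)]
    exact (isCompact_Icc.image_of_continuousOn (hg.sub hh).abs).bddAbove
  exact ciSup_le fun t => hGH _ (fun u hu => le_ciSup hbdd ⟨u, hu⟩) t t.2

section Pinned

variable {a b : ℝ} (hab : a ≤ b) (ya yb : ℝ)

def pinnedMaps : Set C(Icc a b, ℝ) :=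
  {p | p ⟨a, left_mem_Icc.2 hab⟩ = ya ∧ p ⟨b, right_mem_Icc.2 hab⟩ = yb}

lemma isClosed_pinnedMaps : IsClosed (pinnedMaps hab ya yb) :=
  (isClosed_eq (continuous_eval_const _) continuous_const).inter
    (isClosed_eq (continuous_eval_const _) continuous_const)

variable {hab ya yb}

lemma pinnedContinuousOn_IccExtend {p : C(Icc a b, ℝ)} (hp : p ∈ pinnedMaps hab ya yb) :
    PinnedContinuousOn a b ya yb (IccExtend hab p) :=
  ⟨(p.continuous.comp continuous_projIcc).continuousOn, by rw [IccExtend_left]; exact hp.1,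
    by rw [IccExtend_right]; exact hp.2⟩

lemma PinnedContinuousOn.restrict_mem {g : ℝ → ℝ} (hg : PinnedContinuousOn a b ya yb g) :
    ⟨(Icc a b).domRestrict g, hg.1.domRestrict⟩ ∈ pinnedMaps hab ya yb :=
  hg.2

end Pinned

theorem exists_pinned_fixedPoint_of_contraction {a b ya yb K : ℝ} (hab : a < b) (hK0 : 0 ≤ K)
    (hK1 : K < 1) (Φ : (ℝ → ℝ) → ℝ → ℝ)
    (hΦ : ∀ g, PinnedContinuousOn a b ya yb g → PinnedContinuousOn a b ya yb (Φ g))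
    (hΦK : ∀ g h, PinnedContinuousOn a b ya yb g → PinnedContinuousOn a b ya yb h →
      ∀ C, (∀ u ∈ Icc a b, |g u - h u| ≤ C) → ∀ t ∈ Icc a b, |Φ g t - Φ h t| ≤ K * C) :
    ∃ f, PinnedContinuousOn a b ya yb f ∧ EqOn (Φ f) f (Icc a b) ∧
      ∀ g, PinnedContinuousOn a b ya yb g → EqOn (Φ g) g (Icc a b) → EqOn g f (Icc a b) := by
  let X := pinnedMaps hab.le ya yb
  have : CompleteSpace X := (isClosed_pinnedMaps hab.le ya yb).completeSpace_coe
  have : Nonempty X :=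
    let ⟨_, hg⟩ := exists_pinnedContinuousOn hab ya yb; ⟨⟨_, hg.restrict_mem⟩⟩
  let ext : X → ℝ → ℝ := fun p => IccExtend hab.le p.1
  have hext (p : X) : PinnedContinuousOn a b ya yb (ext p) := pinnedContinuousOn_IccExtend p.2
  let Ψ : X → X := fun p => ⟨_, (hΦ _ (hext p)).restrict_mem⟩
  have hΨ : ContractingWith ⟨K, hK0⟩ Ψ := by
    refine ⟨hK1, LipschitzWith.of_dist_le_mul fun p q => ?_⟩
    rw [Subtype.dist_eq, Subtype.dist_eq, ContinuousMap.dist_le (by positivity)]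
    refine fun t => hΦK _ _ (hext p) (hext q) _ (fun u hu => ?_) t t.2
    simp only [ext, IccExtend_of_mem hab.le _ hu, ← Real.dist_eq]
    exact ContinuousMap.dist_apply_le_dist _
  -- `Φ g` depends only on `g` on `[a, b]`: the case `C = 0` of the contraction estimate.
  have hΦcongr {g h : ℝ → ℝ} (hg : PinnedContinuousOn a b ya yb g)
      (hh : PinnedContinuousOn a b ya yb h) (hgh : EqOn g h (Icc a b)) :
      EqOn (Φ g) (Φ h) (Icc a b) := fun t ht => by
    have := hΦK g h hg hh 0 (fun u hu => by simp [hgh hu]) t ht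
    rwa [mul_zero, abs_nonpos_iff, sub_eq_zero] at this
  set p := ContractingWith.fixedPoint Ψ hΨ
  have hp : Ψ p = p := hΨ.fixedPoint_isFixedPt
  refine ⟨ext p, hext p, fun t ht => ?_, fun g hg hgfix t ht => ?_⟩
  · exact (congrArg (fun r : X => r.1 ⟨t, ht⟩) hp).trans (IccExtend_of_mem hab.le _ ht).symm
  · let q : X := ⟨_, hg.restrict_mem⟩
    have hq : Ψ q = q := by
      refine Subtype.ext (ContinuousMap.ext fun u => ?_)
      refine (hΦcongr (hext q) hg (fun v hv => ?_) u.2).trans (hgfix u.2)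
      exact IccExtend_of_mem hab.le _ hv
    exact (congrArg (fun r : X => r.1 ⟨t, ht⟩) (hΨ.fixedPoint_unique hq)).trans
      (IccExtend_of_mem hab.le _ ht).symm

section ReadBajraktarevic

variable {N : ℕ} {x y : ℕ → ℝ} {L Li : ℕ → ℝ → ℝ} {F : ℕ → ℝ → ℝ → ℝ}
  {T : (ℝ → ℝ) → ℝ → ℝ} {g : ℝ → ℝ}

lemma rb_apply_L
    (hLmaps : ∀ i < N, MapsTo (L i) (Icc (x 0) (x N)) (Icc (x i) (x (i + 1))))
    (hLiL : ∀ i < N, ∀ t ∈ Icc (x 0) (x N), Li i (L i t) = t)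
    (hT : ∀ g : ℝ → ℝ, g (x 0) = y 0 → g (x N) = y N → ∀ i < N,
      ∀ t ∈ Icc (x i) (x (i + 1)), T g t = F i (Li i t) (g (Li i t)))
    (hg0 : g (x 0) = y 0) (hgN : g (x N) = y N) {i : ℕ} (hi : i < N) {t : ℝ}
    (ht : t ∈ Icc (x 0) (x N)) :
    T g (L i t) = F i t (g t) := by
  rw [hT g hg0 hgN i hi _ (hLmaps i hi ht), hLiL i hi t ht]

lemma continuousOn_rb (hx : ∀ i < N, x i ≤ x (i + 1))
    (hLimaps : ∀ i < N, MapsTo (Li i) (Icc (x i) (x (i + 1))) (Icc (x 0) (x N)))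
    (hLicont : ∀ i < N, ContinuousOn (Li i) (Icc (x i) (x (i + 1))))
    (hFcont : ∀ i < N,
      ContinuousOn (fun p : ℝ × ℝ => F i p.1 p.2) ((Icc (x 0) (x N)) ×ˢ (univ : Set ℝ)))
    (hT : ∀ g : ℝ → ℝ, g (x 0) = y 0 → g (x N) = y N → ∀ i < N,
      ∀ t ∈ Icc (x i) (x (i + 1)), T g t = F i (Li i t) (g (Li i t)))
    (hg : PinnedContinuousOn (x 0) (x N) (y 0) (y N) g) :
    ContinuousOn (T g) (Icc (x 0) (x N)) := by
  refine continuousOn_Icc_of_forall_Icc_succ hx fun i hi => ?_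
  have hcomp : ContinuousOn (fun t => F i (Li i t) (g (Li i t))) (Icc (x i) (x (i + 1))) :=
    (hFcont i hi).comp ((hLicont i hi).prodMk (hg.1.comp (hLicont i hi) (hLimaps i hi)))
      fun t ht => ⟨hLimaps i hi ht, trivial⟩
  exact hcomp.congr (hT g hg.2.1 hg.2.2 i hi)

lemma abs_rb_sub_le_mul (hx : ∀ i < N, x i ≤ x (i + 1)) (hN : 0 < N)
    (hLimaps : ∀ i < N, MapsTo (Li i) (Icc (x i) (x (i + 1))) (Icc (x 0) (x N)))
    {K : ℝ} (hK : 0 ≤ K)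
    (hFlip : ∀ i < N, ∀ t ∈ Icc (x 0) (x N), ∀ u v : ℝ, |F i t u - F i t v| ≤ K * |u - v|)
    (hT : ∀ g : ℝ → ℝ, g (x 0) = y 0 → g (x N) = y N → ∀ i < N,
      ∀ t ∈ Icc (x i) (x (i + 1)), T g t = F i (Li i t) (g (Li i t)))
    {h : ℝ → ℝ} (hg : PinnedContinuousOn (x 0) (x N) (y 0) (y N) g)
    (hh : PinnedContinuousOn (x 0) (x N) (y 0) (y N) h) {C : ℝ}
    (hC : ∀ u ∈ Icc (x 0) (x N), |g u - h u| ≤ C) {t : ℝ} (ht : t ∈ Icc (x 0) (x N)) :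
    |T g t - T h t| ≤ K * C := by
  obtain ⟨i, hi, hti⟩ := exists_mem_Icc_succ hx hN ht
  rw [hT g hg.2.1 hg.2.2 i hi t hti, hT h hh.2.1 hh.2.2 i hi t hti]
  exact (hFlip i hi _ (hLimaps i hi hti) _ _).trans
    (mul_le_mul_of_nonneg_left (hC _ (hLimaps i hi hti)) hK)

lemma rb_apply_knot (hx0N : x 0 ≤ x N)
    (hLmaps : ∀ i < N, MapsTo (L i) (Icc (x 0) (x N)) (Icc (x i) (x (i + 1))))
    (hL0 : ∀ i < N, L i (x 0) = x i)
    (hLiL : ∀ i < N, ∀ t ∈ Icc (x 0) (x N), Li i (L i t) = t)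
    (hF0 : ∀ i < N, F i (x 0) (y 0) = y i)
    (hT : ∀ g : ℝ → ℝ, g (x 0) = y 0 → g (x N) = y N → ∀ i < N,
      ∀ t ∈ Icc (x i) (x (i + 1)), T g t = F i (Li i t) (g (Li i t)))
    (hg0 : g (x 0) = y 0) (hgN : g (x N) = y N) {i : ℕ} (hi : i < N) :
    T g (x i) = y i := by
  rw [← hL0 i hi, rb_apply_L hLmaps hLiL hT hg0 hgN hi (left_mem_Icc.2 hx0N), hg0, hF0 i hi]

lemma pinnedContinuousOn_rb (hx : ∀ i < N, x i ≤ x (i + 1)) (hN : 0 < N)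
    (hLmaps : ∀ i < N, MapsTo (L i) (Icc (x 0) (x N)) (Icc (x i) (x (i + 1))))
    (hL0 : ∀ i < N, L i (x 0) = x i) (hLN : ∀ i < N, L i (x N) = x (i + 1))
    (hLiL : ∀ i < N, ∀ t ∈ Icc (x 0) (x N), Li i (L i t) = t)
    (hLimaps : ∀ i < N, MapsTo (Li i) (Icc (x i) (x (i + 1))) (Icc (x 0) (x N)))
    (hLicont : ∀ i < N, ContinuousOn (Li i) (Icc (x i) (x (i + 1))))
    (hFcont : ∀ i < N,
      ContinuousOn (fun p : ℝ × ℝ => F i p.1 p.2) ((Icc (x 0) (x N)) ×ˢ (univ : Set ℝ)))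
    (hF0 : ∀ i < N, F i (x 0) (y 0) = y i) (hFN : ∀ i < N, F i (x N) (y N) = y (i + 1))
    (hT : ∀ g : ℝ → ℝ, g (x 0) = y 0 → g (x N) = y N → ∀ i < N,
      ∀ t ∈ Icc (x i) (x (i + 1)), T g t = F i (Li i t) (g (Li i t)))
    (hg : PinnedContinuousOn (x 0) (x N) (y 0) (y N) g) :
    PinnedContinuousOn (x 0) (x N) (y 0) (y N) (T g) := by
  have hx0N : x 0 ≤ x N := le_of_le_succ_of_le hx (Nat.zero_le N) le_rfl
  refine ⟨continuousOn_rb hx hLimaps hLicont hFcont hT hg,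
    rb_apply_knot hx0N hLmaps hL0 hLiL hF0 hT hg.2.1 hg.2.2 hN, ?_⟩
  obtain ⟨k, rfl⟩ := Nat.exists_eq_add_one_of_ne_zero hN.ne'
  rw [← hLN k k.lt_succ_self, rb_apply_L hLmaps hLiL hT hg.2.1 hg.2.2 k.lt_succ_self
    (right_mem_Icc.2 hx0N), hg.2.2, hFN k k.lt_succ_self]

end ReadBajraktarevic

/-- The Read–Bajraktarević operator on `C_{y0,yN}(I)` is well-defined, is a contraction with
factor `max s_i < 1`, and its unique fixed point is the continuous fractal interpolation
function. -/
theorem stmt0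
    (N : ℕ) (hN : 2 ≤ N)
    (x y : ℕ → ℝ)
    (hx : ∀ i, i < N → x i < x (i + 1))
    (L Li : ℕ → ℝ → ℝ)
    (hLmaps : ∀ i, i < N → MapsTo (L i) (Icc (x 0) (x N)) (Icc (x i) (x (i + 1))))
    (hL0 : ∀ i, i < N → L i (x 0) = x i)
    (hLN : ∀ i, i < N → L i (x N) = x (i + 1))
    (hLiL : ∀ i, i < N → ∀ t ∈ Icc (x 0) (x N), Li i (L i t) = t)
    (hLLi : ∀ i, i < N → ∀ t ∈ Icc (x i) (x (i + 1)),
      L i (Li i t) = t ∧ Li i t ∈ Icc (x 0) (x N))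
    (hLicont : ∀ i, i < N → ContinuousOn (Li i) (Icc (x i) (x (i + 1))))
    (F : ℕ → ℝ → ℝ → ℝ) (s : ℕ → ℝ)
    (hs : ∀ i, i < N → s i ∈ Ioo (0 : ℝ) 1)
    (hFcont : ∀ i, i < N →
      ContinuousOn (fun p : ℝ × ℝ => F i p.1 p.2) ((Icc (x 0) (x N)) ×ˢ (univ : Set ℝ)))
    (hF0 : ∀ i, i < N → F i (x 0) (y 0) = y i)
    (hFN : ∀ i, i < N → F i (x N) (y N) = y (i + 1))
    (hFlip : ∀ i, i < N → ∀ t ∈ Icc (x 0) (x N), ∀ u v : ℝ,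
      |F i t u - F i t v| ≤ s i * |u - v|)
    (T : (ℝ → ℝ) → ℝ → ℝ)
    (hT : ∀ g : ℝ → ℝ, g (x 0) = y 0 → g (x N) = y N → ∀ i, i < N →
      ∀ t ∈ Icc (x i) (x (i + 1)), T g t = F i (Li i t) (g (Li i t))) :
    (∀ g : ℝ → ℝ, ContinuousOn g (Icc (x 0) (x N)) → g (x 0) = y 0 → g (x N) = y N →
      ContinuousOn (T g) (Icc (x 0) (x N)) ∧ T g (x 0) = y 0 ∧ T g (x N) = y N) ∧
    (Finset.range N).sup' (Finset.nonempty_range_iff.mpr (by omega)) s < 1 ∧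
    (∀ g h : ℝ → ℝ,
      ContinuousOn g (Icc (x 0) (x N)) → g (x 0) = y 0 → g (x N) = y N →
      ContinuousOn h (Icc (x 0) (x N)) → h (x 0) = y 0 → h (x N) = y N →
      (⨆ t : Icc (x 0) (x N), |T g (t : ℝ) - T h (t : ℝ)|) ≤
        (Finset.range N).sup' (Finset.nonempty_range_iff.mpr (by omega)) s *
          ⨆ t : Icc (x 0) (x N), |g (t : ℝ) - h (t : ℝ)|) ∧
    (∃ f : ℝ → ℝ, ContinuousOn f (Icc (x 0) (x N)) ∧ f (x 0) = y 0 ∧ f (x N) = y N ∧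
      (∀ t ∈ Icc (x 0) (x N), T f t = f t) ∧
      (∀ j, j ≤ N → f (x j) = y j) ∧
      (∀ i, i < N → ∀ t ∈ Icc (x 0) (x N), f (L i t) = F i t (f t)) ∧
      (∀ g : ℝ → ℝ, ContinuousOn g (Icc (x 0) (x N)) → g (x 0) = y 0 → g (x N) = y N →
        (∀ t ∈ Icc (x 0) (x N), T g t = g t) →
        ∀ t ∈ Icc (x 0) (x N), g t = f t)) := by
  have hxle : ∀ i < N, x i ≤ x (i + 1) := fun i hi => (hx i hi).le
  have hI : x 0 < x N := (hx 0 (by omega)).trans_le (le_of_le_succ_of_le hxle (by omega) le_rfl)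
  have hLimaps : ∀ i < N, MapsTo (Li i) (Icc (x i) (x (i + 1))) (Icc (x 0) (x N)) :=
    fun i hi t ht => (hLLi i hi t ht).2
  set S := (Finset.range N).sup' (Finset.nonempty_range_iff.mpr (by omega)) s
  have hsS : ∀ i < N, s i ≤ S := fun i hi => Finset.le_sup' s (Finset.mem_range.2 hi)
  have hS1 : S < 1 := (Finset.sup'_lt_iff _).2 fun i hi => (hs i (Finset.mem_range.1 hi)).2
  have hS0 : 0 ≤ S := (hs 0 (by omega)).1.le.trans (hsS 0 (by omega))
  have hFS : ∀ i < N, ∀ t ∈ Icc (x 0) (x N), ∀ u v : ℝ, |F i t u - F i t v| ≤ S * |u - v| :=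
    fun i hi t ht u v =>
      (hFlip i hi t ht u v).trans (mul_le_mul_of_nonneg_right (hsS i hi) (abs_nonneg _))
  have hpin : ∀ g, PinnedContinuousOn (x 0) (x N) (y 0) (y N) g →
      PinnedContinuousOn (x 0) (x N) (y 0) (y N) (T g) := fun _ hg =>
    pinnedContinuousOn_rb hxle (by omega) hLmaps hL0 hLN hLiL hLimaps hLicont hFcont hF0 hFN hT hg
  have hcontr : ∀ g h, PinnedContinuousOn (x 0) (x N) (y 0) (y N) g →
      PinnedContinuousOn (x 0) (x N) (y 0) (y N) h → ∀ C, (∀ u ∈ Icc (x 0) (x N), |g u - h u| ≤ C) →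
      ∀ t ∈ Icc (x 0) (x N), |T g t - T h t| ≤ S * C := fun _ _ hg hh _ hC _ ht =>
    abs_rb_sub_le_mul hxle (by omega) hLimaps hS0 hFS hT hg hh hC ht
  obtain ⟨f, hf, hfix, huniq⟩ := exists_pinned_fixedPoint_of_contraction hI hS0 hS1 T hpin hcontr
  refine ⟨fun g hg hg0 hgN => hpin g ⟨hg, hg0, hgN⟩, hS1,
    fun g h hg hg0 hgN hh hh0 hhN =>
      ciSup_abs_sub_le_mul_ciSup hI.le hg hh (hcontr g h ⟨hg, hg0, hgN⟩ ⟨hh, hh0, hhN⟩),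
    f, hf.1, hf.2.1, hf.2.2, hfix, fun j hj => ?_, fun i hi t ht => ?_,
    fun g hg hg0 hgN hgfix => huniq g ⟨hg, hg0, hgN⟩ hgfix⟩
  · rcases hj.lt_or_eq with hj | rfl
    · rw [← hfix (Icc_succ_subset_Icc hxle hj ⟨le_rfl, hxle j hj⟩),
        rb_apply_knot hI.le hLmaps hL0 hLiL hF0 hT hf.2.1 hf.2.2 hj]
    · exact hf.2.2
  · rw [← hfix (Icc_succ_subset_Icc hxle hi (hLmaps i hi ht)),
      rb_apply_L hLmaps hLiL hT hf.2.1 hf.2.2 hi ht]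
end

section
/- Let f be the unique continuous function on I with f(x_j) = y_j for j = 0,…,N satisfying f(L_i(x)) = F_i(x, f(x)) for all x ∈ I and i = 1,…,N. Then the graph G = {(x, f(x)) : x ∈ I} is a nonempty compact subset of I × ℝ satisfying the self-referential set equation G = ⋃_{i=1}^N W_i(G), where W_i(x, y) = (L_i(x), F_i(x, y)). -/
open Set

/-!
The nodes `x 0 ≤ ⋯ ≤ x N` cut `I` into the intervals `[x i, x (i + 1)]`, and by the intermediate
value theorem each `L i` maps `I` onto `[x i, x (i + 1)]`. The functional equation says precisely
that `W i` maps the graph of `f` over `I` onto the graph of `f` over `L i '' I`, so the union of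
the `W i '' G` is the graph of `f` over the union of the subintervals, which is `G` itself.
-/

theorem biUnion_range_Icc_add_one {α : Type*} [LinearOrder α] {x : ℕ → α} {n : ℕ}
    (hx : MonotoneOn x (Iic n)) (hn : 0 < n) :
    ⋃ i ∈ Finset.range n, Icc (x i) (x (i + 1)) = Icc (x 0) (x n) := by
  induction n with
  | zero => omega
  | succ n ih =>
    rcases Nat.eq_zero_or_pos n with rfl | hn
    · simp
    have hx' : MonotoneOn x (Iic n) := hx.mono (Iic_subset_Iic.2 n.le_succ)
    rw [Finset.range_add_one, Finset.set_biUnion_insert, ih hx' hn, union_comm]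
    exact Icc_union_Icc_eq_Icc (hx' n.zero_le (le_refl n) n.zero_le)
      (hx n.le_succ (le_refl (n + 1)) n.le_succ)

theorem image_Icc_eq_Icc_of_continuousOn {α δ : Type*} [ConditionallyCompleteLinearOrder α]
    [TopologicalSpace α] [OrderTopology α] [DenselyOrdered α] [LinearOrder δ]
    [TopologicalSpace δ] [OrderClosedTopology δ] {g : α → δ} {a b : α} {c d : δ}
    (hab : a ≤ b) (hg : ContinuousOn g (Icc a b)) (hmaps : MapsTo g (Icc a b) (Icc c d))
    (hga : g a = c) (hgb : g b = d) : g '' Icc a b = Icc c d :=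
  hmaps.image_subset.antisymm (hga ▸ hgb ▸ intermediate_value_Icc hab hg)

theorem image_graphOn_eq_graphOn_image {α β : Type*} {f : α → β} {L : α → α} {F : α → β → β}
    {s : Set α} (hf : ∀ t ∈ s, f (L t) = F t (f t)) :
    (fun p : α × β => (L p.1, F p.1 p.2)) '' s.graphOn f = (L '' s).graphOn f := by
  simp only [graphOn, image_image]
  exact image_congr fun t ht => by rw [hf t ht]

theorem stmt1_general
    (N : ℕ) (hN : 2 ≤ N)
    (x : ℕ → ℝ)
    (hx : ∀ i, i < N → x i < x (i + 1))
    (L : ℕ → ℝ → ℝ) (l : ℕ → ℝ)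
    (hLmaps : ∀ i, i < N → MapsTo (L i) (Icc (x 0) (x N)) (Icc (x i) (x (i + 1))))
    (hL0 : ∀ i, i < N → L i (x 0) = x i)
    (hLN : ∀ i, i < N → L i (x N) = x (i + 1))
    (hLlip : ∀ i, i < N → ∀ u ∈ Icc (x 0) (x N), ∀ v ∈ Icc (x 0) (x N),
      |L i u - L i v| ≤ l i * |u - v|)
    (F : ℕ → ℝ → ℝ → ℝ)
    (f : ℝ → ℝ)
    (hfc : ContinuousOn f (Icc (x 0) (x N)))
    (hfe : ∀ i, i < N → ∀ t ∈ Icc (x 0) (x N), f (L i t) = F i t (f t)) :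
    ((fun t => (t, f t)) '' Icc (x 0) (x N)).Nonempty ∧
    IsCompact ((fun t => (t, f t)) '' Icc (x 0) (x N)) ∧
    ((fun t => (t, f t)) '' Icc (x 0) (x N)) ⊆ (Icc (x 0) (x N)) ×ˢ (univ : Set ℝ) ∧
    ((fun t => (t, f t)) '' Icc (x 0) (x N)) =
      ⋃ i ∈ Finset.range N,
        (fun p : ℝ × ℝ => (L i p.1, F i p.1 p.2)) '' ((fun t => (t, f t)) '' Icc (x 0) (x N)) := by
  have hmono : MonotoneOn x (Iic N) :=
    monotoneOn_of_le_add_one ordConnected_Iic fun i _ _ hi => (hx i hi).le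
  have hx0N : x 0 ≤ x N := hmono N.zero_le (le_refl N) N.zero_le
  have hLimage : ∀ i < N, L i '' Icc (x 0) (x N) = Icc (x i) (x (i + 1)) := fun i hi =>
    image_Icc_eq_Icc_of_continuousOn hx0N (LipschitzOnWith.of_dist_le' (hLlip i hi)).continuousOn
      (hLmaps i hi) (hL0 i hi) (hLN i hi)
  refine ⟨(nonempty_Icc.2 hx0N).image _,
    isCompact_Icc.image_of_continuousOn (continuousOn_id.prodMk hfc),
    image_subset_iff.2 fun t ht => ⟨ht, trivial⟩, ?_⟩
  change (Icc (x 0) (x N)).graphOn f =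
    ⋃ i ∈ Finset.range N, (fun p : ℝ × ℝ => (L i p.1, F i p.1 p.2)) '' (Icc (x 0) (x N)).graphOn f
  calc (Icc (x 0) (x N)).graphOn f
      = (⋃ i ∈ Finset.range N, Icc (x i) (x (i + 1))).graphOn f := by
        rw [biUnion_range_Icc_add_one hmono (by omega)]
    _ = ⋃ i ∈ Finset.range N, (Icc (x i) (x (i + 1))).graphOn f := image_iUnion₂ _ _
    _ = _ := iUnion₂_congr fun i hi => by
        rw [image_graphOn_eq_graphOn_image (hfe i (Finset.mem_range.1 hi)),
          hLimage i (Finset.mem_range.1 hi)]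

/-- The graph of the fractal interpolation function is a nonempty compact subset of `I × ℝ`
satisfying the self-referential set equation `G = ⋃ i, W i '' G`. -/
theorem stmt1
    (N : ℕ) (hN : 2 ≤ N)
    (x y : ℕ → ℝ)
    (hx : ∀ i, i < N → x i < x (i + 1))
    (L : ℕ → ℝ → ℝ) (l : ℕ → ℝ)
    (hl : ∀ i, i < N → l i ∈ Ioo (0 : ℝ) 1)
    (hLmaps : ∀ i, i < N → MapsTo (L i) (Icc (x 0) (x N)) (Icc (x i) (x (i + 1))))
    (hLinj : ∀ i, i < N → InjOn (L i) (Icc (x 0) (x N)))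
    (hL0 : ∀ i, i < N → L i (x 0) = x i)
    (hLN : ∀ i, i < N → L i (x N) = x (i + 1))
    (hLlip : ∀ i, i < N → ∀ u ∈ Icc (x 0) (x N), ∀ v ∈ Icc (x 0) (x N),
      |L i u - L i v| ≤ l i * |u - v|)
    (F : ℕ → ℝ → ℝ → ℝ) (s : ℕ → ℝ)
    (hs : ∀ i, i < N → s i ∈ Ioo (0 : ℝ) 1)
    (hFcont : ∀ i, i < N →
      ContinuousOn (fun p : ℝ × ℝ => F i p.1 p.2) ((Icc (x 0) (x N)) ×ˢ (univ : Set ℝ)))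
    (hF0 : ∀ i, i < N → F i (x 0) (y 0) = y i)
    (hFN : ∀ i, i < N → F i (x N) (y N) = y (i + 1))
    (hFlip : ∀ i, i < N → ∀ t ∈ Icc (x 0) (x N), ∀ u v : ℝ,
      |F i t u - F i t v| ≤ s i * |u - v|)
    (f : ℝ → ℝ)
    (hfc : ContinuousOn f (Icc (x 0) (x N)))
    (hfi : ∀ j, j ≤ N → f (x j) = y j)
    (hfe : ∀ i, i < N → ∀ t ∈ Icc (x 0) (x N), f (L i t) = F i t (f t)) :
    ((fun t => (t, f t)) '' Icc (x 0) (x N)).Nonempty ∧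
    IsCompact ((fun t => (t, f t)) '' Icc (x 0) (x N)) ∧
    ((fun t => (t, f t)) '' Icc (x 0) (x N)) ⊆ (Icc (x 0) (x N)) ×ˢ (univ : Set ℝ) ∧
    ((fun t => (t, f t)) '' Icc (x 0) (x N)) =
      ⋃ i ∈ Finset.range N,
        (fun p : ℝ × ℝ => (L i p.1, F i p.1 p.2)) '' ((fun t => (t, f t)) '' Icc (x 0) (x N)) :=
  stmt1_general N hN x hx L l hLmaps hL0 hLN hLlip F f hfc hfe
end

section
/- Suppose that for some integer k ≥ 1, |α_i| < a_i^k and q_i ∈ C^k(I) for i = 1,…,N, and suppose q_i(x_0) = y_{i-1} − α_i y_0 and q_i(x_N) = y_i − α_i y_N for all i. Define F_{i,r}(x, y) = (α_i y + q_i^{(r)}(x))/a_i^r, y_{0,r} = q_1^{(r)}(x_0)/(a_1^r − α_1), and y_{N,r} = q_N^{(r)}(x_N)/(a_N^r − α_N) for r = 1,…,k. If F_{i-1,r}(x_N, y_{N,r}) = F_{i,r}(x_0, y_{0,r}) for all i = 2,…,N and r = 1,…,k, then the unique continuous function f satisfying f(L_i(x)) = α_i f(x) + q_i(x) belongs to C^k(I),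 and for each r = 1,…,k its r-th derivative satisfies f^{(r)}(L_i(x)) = F_{i,r}(x, f^{(r)}(x)) for all x ∈ I and i = 1,…,N. -/
/-!
Differentiating `f (L_i t) = (α_i f t + q_i t) / c_i` suggests that `f'` solves the equation with
data `α_i`, `q_i'`, `c_i a_i`. When `|α_i| < c_i a_i` and the endpoint values match at the nodes,
the Read–Bajraktarević operator of that equation is a contraction on the continuous functions on
`I` with the forced endpoint values, so it has a continuous fixed point `g`. An antiderivative `h`
of `g` with `h x_0 = f x_0` satisfies the original equation up to constants, so `e = h - f`
satisfies `e (L_i t) = (α_i / c_i) e t + e x_{i-1}`. Telescoping over the nodes with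
`∑ |α_i / c_i| < ∑ a_i = 1` kills the node values, and then the maximum of `|e|` is at most
`max |α_i / c_i|` times itself, so `e = 0` and `f' = g`. Induction on `r` with `c_i = a_i ^ r`
gives the theorem.
-/

open Set

-- Indices are shifted by one from the paper: `aC x N i`, `bC x N i`, `Lm x N i` are
-- `a_{i+1}`, `b_{i+1}`, `L_{i+1}`.
noncomputable def aC (x : ℕ → ℝ) (N i : ℕ) : ℝ := (x (i + 1) - x i) / (x N - x 0)

noncomputable def bC (x : ℕ → ℝ) (N i : ℕ) : ℝ := (x N * x i - x 0 * x (i + 1)) / (x N - x 0)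

noncomputable def Lm (x : ℕ → ℝ) (N i : ℕ) (t : ℝ) : ℝ := aC x N i * t + bC x N i

theorem Icc_subset_biUnion_Icc {X : Type*} [LinearOrder X] (a : ℕ → X) {n : ℕ} (hn : 0 < n) :
    Icc (a 0) (a n) ⊆ ⋃ i ∈ Finset.range n, Icc (a i) (a (i + 1)) := by
  induction n, hn using Nat.le_induction with
  | base => simp
  | succ n _ ih => calc
    _ ⊆ Icc (a 0) (a n) ∪ Icc (a n) (a (n + 1)) := Icc_subset_Icc_union_Icc
    _ ⊆ _ := by simpa [Finset.range_add_one] using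
                  union_subset_union_right (Icc (a n) (a (n + 1))) ih

theorem continuousOn_Icc_of_continuousOn_Icc_succ {X Y : Type*} [LinearOrder X]
    [TopologicalSpace X] [OrderClosedTopology X] [TopologicalSpace Y] {G : X → Y} (a : ℕ → X)
    (n : ℕ) (hG : ∀ i < n, ContinuousOn G (Icc (a i) (a (i + 1)))) :
    ContinuousOn G (Icc (a 0) (a n)) := by
  induction n with
  | zero => simp [continuousOn_singleton]
  | succ n ih =>
    exact ((ih fun i hi => hG i (by omega)).union_of_isClosed (hG n (by omega)) isClosed_Icc
      isClosed_Icc).mono Icc_subset_Icc_union_Icc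

theorem eq_zero_of_eq_mul_add {u β : ℕ → ℝ} {N : ℕ} (hβ : ∑ i ∈ Finset.range N, |β i| < 1)
    (hu₀ : u 0 = 0) (hu : ∀ i < N, u (i + 1) = β i * u N + u i) : ∀ i ≤ N, u i = 0 := by
  have huN : u N = (∑ i ∈ Finset.range N, β i) * u N := calc
    u N = ∑ i ∈ Finset.range N, (u (i + 1) - u i) := by rw [Finset.sum_range_sub, hu₀, sub_zero]
    _ = ∑ i ∈ Finset.range N, β i * u N :=
      Finset.sum_congr rfl fun i hi => by rw [hu i (Finset.mem_range.1 hi), add_sub_cancel_right]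
    _ = _ := (Finset.sum_mul _ _ _).symm
  have hsum : (∑ i ∈ Finset.range N, β i) ≠ 1 := fun h =>
    ((Finset.abs_sum_le_sum_abs _ _).trans_lt hβ).ne (by rw [h, abs_one])
  have huN0 : u N = 0 := by
    by_contra h
    exact hsum (mul_right_cancel₀ h (by rw [one_mul, ← huN]))
  intro i
  induction i with
  | zero => exact fun _ => hu₀
  | succ i ih => exact fun hi => by rw [hu i hi, huN0, ih (by omega), mul_zero, add_zero]

theorem isFixedPt_div_sub {A β Q : ℝ} (hA : A ≠ 0) (hAβ : A - β ≠ 0) :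
    Function.IsFixedPt (fun y => (β * y + Q) / A) (Q / (A - β)) := by
  simp only [Function.IsFixedPt]
  field_simp
  ring

section Nodes

variable {x : ℕ → ℝ} {N : ℕ}

theorem strictMonoOn_nodes (hx : ∀ i < N, x i < x (i + 1)) : StrictMonoOn x (Iic N) :=
  strictMonoOn_Iic_of_lt_succ fun i hi => by simpa using hx i hi

theorem nodes_le (hx : ∀ i < N, x i < x (i + 1)) {i : ℕ} (hi : i < N) :
    x 0 ≤ x i ∧ x (i + 1) ≤ x N :=
  ⟨(strictMonoOn_nodes hx).monotoneOn (by simp) (by simp; omega) (Nat.zero_le i),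
    (strictMonoOn_nodes hx).monotoneOn (by simp; omega) (by simp) hi⟩

theorem x_zero_lt_x_N (hx : ∀ i < N, x i < x (i + 1)) (hN : 0 < N) : x 0 < x N :=
  strictMonoOn_nodes hx (by simp) (by simp) hN

theorem aC_pos (hx : ∀ i < N, x i < x (i + 1)) {i : ℕ} (hi : i < N) : 0 < aC x N i :=
  div_pos (sub_pos.2 (hx i hi)) (sub_pos.2 (by linarith [hx i hi, nodes_le hx hi]))

theorem aC_le_one (hx : ∀ i < N, x i < x (i + 1)) {i : ℕ} (hi : i < N) : aC x N i ≤ 1 := by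
  have := nodes_le hx hi
  exact (div_le_one (sub_pos.2 (by linarith [hx i hi]))).2 (by linarith)

theorem sum_aC (hx : ∀ i < N, x i < x (i + 1)) (hN : 0 < N) :
    ∑ i ∈ Finset.range N, aC x N i = 1 := by
  simp only [aC]
  rw [← Finset.sum_div, Finset.sum_range_sub (f := x),
    div_self (sub_pos.2 (x_zero_lt_x_N hx hN)).ne']

theorem Lm_left (h : x 0 ≠ x N) (i : ℕ) : Lm x N i (x 0) = x i := by
  have := sub_ne_zero.2 h.symm
  simp only [Lm, aC, bC]
  field_simp
  ring

theorem Lm_right (h : x 0 ≠ x N) (i : ℕ) : Lm x N i (x N) = x (i + 1) := by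
  have := sub_ne_zero.2 h.symm
  simp only [Lm, aC, bC]
  field_simp
  ring

theorem Lm_sub_div {i : ℕ} (h : aC x N i ≠ 0) (t : ℝ) :
    (Lm x N i t - bC x N i) / aC x N i = t := by
  rw [Lm, add_sub_cancel_right, mul_div_cancel_left₀ _ h]

theorem image_Lm (hx : ∀ i < N, x i < x (i + 1)) {i : ℕ} (hi : i < N) :
    Lm x N i '' Icc (x 0) (x N) = Icc (x i) (x (i + 1)) := by
  have h0N : x 0 ≠ x N := (x_zero_lt_x_N hx (by omega)).ne
  rw [← Lm_left h0N i, ← Lm_right h0N i]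
  exact image_affine_Icc' (aC_pos hx hi) _ _ _

theorem Lm_mem (hx : ∀ i < N, x i < x (i + 1)) {i : ℕ} (hi : i < N) {t : ℝ}
    (ht : t ∈ Icc (x 0) (x N)) : Lm x N i t ∈ Icc (x 0) (x N) :=
  Icc_subset_Icc (nodes_le hx hi).1 (nodes_le hx hi).2 (image_Lm hx hi ▸ mem_image_of_mem _ ht)

theorem exists_Lm_eq (hx : ∀ i < N, x i < x (i + 1)) (hN : 0 < N) {z : ℝ}
    (hz : z ∈ Icc (x 0) (x N)) : ∃ i < N, ∃ t ∈ Icc (x 0) (x N), Lm x N i t = z := by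
  obtain ⟨i, hi, hzi⟩ := mem_iUnion₂.1 (Icc_subset_biUnion_Icc x hN hz)
  have hi := Finset.mem_range.1 hi
  rw [← image_Lm hx hi] at hzi
  exact ⟨i, hi, hzi⟩

end Nodes

noncomputable def glue (x : ℕ → ℝ) (P : ℕ → ℝ → ℝ) : ℕ → ℝ → ℝ
  | 0 => P 0
  | n + 1 => fun z => if z ≤ x n then glue x P n z else P n z

theorem glue_eqOn {x : ℕ → ℝ} {P : ℕ → ℝ → ℝ} {n : ℕ} (hx : MonotoneOn x (Iic n))
    (hP : ∀ i, i + 1 < n → P i (x (i + 1)) = P (i + 1) (x (i + 1))) :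
    ∀ i < n, EqOn (glue x P n) (P i) (Icc (x i) (x (i + 1))) := by
  induction n with
  | zero => exact fun i hi => absurd hi (Nat.not_lt_zero i)
  | succ n ih =>
    intro i hi z hz
    have ih := ih (hx.mono (Iic_subset_Iic.2 n.le_succ)) fun j hj => hP j (by omega)
    simp only [glue]
    rcases Nat.lt_succ_iff_lt_or_eq.1 hi with hi | rfl
    · rw [if_pos (hz.2.trans (hx (by simp; omega) (by simp) hi))]
      exact ih i hi hz
    · split_ifs with h
      · obtain rfl : z = x i := le_antisymm h hz.1
        cases i with
        | zero => rfl
        | succ m => rw [ih m (by omega) ⟨hx (by simp; omega) (by simp) m.le_succ, le_rfl⟩,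
            hP m (by omega)]
      · rfl

/-- With `c i = aC x N i ^ r` this is the paper's `f (L_i t) = F_{i,r}(t, f t)`. -/
def SelfReferential (x : ℕ → ℝ) (N : ℕ) (α c : ℕ → ℝ) (q : ℕ → ℝ → ℝ) (f : ℝ → ℝ) : Prop :=
  ∀ i < N, ∀ t ∈ Icc (x 0) (x N), f (Lm x N i t) = (α i * f t + q i t) / c i

-- `(z - bC x N i) / aC x N i` is `L_i⁻¹ z`.
noncomputable def rbPiece (x : ℕ → ℝ) (N : ℕ) (α c : ℕ → ℝ) (q : ℕ → ℝ → ℝ) (G : ℝ → ℝ)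
    (i : ℕ) (z : ℝ) : ℝ :=
  (α i * G ((z - bC x N i) / aC x N i) + q i ((z - bC x N i) / aC x N i)) / c i

/-- The Read–Bajraktarević operator, whose fixed points solve `SelfReferential`. -/
noncomputable def rbOperator (x : ℕ → ℝ) (N : ℕ) (α c : ℕ → ℝ) (q : ℕ → ℝ → ℝ) (G : ℝ → ℝ) :
    ℝ → ℝ :=
  glue x (rbPiece x N α c q G) N

section ReadBajraktarevic

variable {x : ℕ → ℝ} {N : ℕ} {α c : ℕ → ℝ} {q : ℕ → ℝ → ℝ} {G : ℝ → ℝ}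

theorem rbPiece_Lm {i : ℕ} (ha : aC x N i ≠ 0) (t : ℝ) :
    rbPiece x N α c q G i (Lm x N i t) = (α i * G t + q i t) / c i := by
  simp only [rbPiece, Lm_sub_div ha]

theorem rbOperator_eqOn (hx : ∀ i < N, x i < x (i + 1))
    (hG : ∀ i, i + 1 < N →
      (α i * G (x N) + q i (x N)) / c i = (α (i + 1) * G (x 0) + q (i + 1) (x 0)) / c (i + 1)) :
    ∀ i < N, EqOn (rbOperator x N α c q G) (rbPiece x N α c q G i) (Icc (x i) (x (i + 1))) := by
  refine glue_eqOn (strictMonoOn_nodes hx).monotoneOn fun i hi => ?_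
  have h0N : x 0 ≠ x N := (x_zero_lt_x_N hx (by omega)).ne
  calc rbPiece x N α c q G i (x (i + 1)) = rbPiece x N α c q G i (Lm x N i (x N)) := by
        rw [Lm_right h0N]
    _ = (α i * G (x N) + q i (x N)) / c i := rbPiece_Lm (aC_pos hx (by omega)).ne' _
    _ = rbPiece x N α c q G (i + 1) (Lm x N (i + 1) (x 0)) :=
        (hG i hi).trans (rbPiece_Lm (aC_pos hx hi).ne' _).symm
    _ = _ := by rw [Lm_left h0N]

theorem rbOperator_Lm (hx : ∀ i < N, x i < x (i + 1))
    (hG : ∀ i, i + 1 < N →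
      (α i * G (x N) + q i (x N)) / c i = (α (i + 1) * G (x 0) + q (i + 1) (x 0)) / c (i + 1))
    {i : ℕ} (hi : i < N) {t : ℝ} (ht : t ∈ Icc (x 0) (x N)) :
    rbOperator x N α c q G (Lm x N i t) = (α i * G t + q i t) / c i := by
  rw [rbOperator_eqOn hx hG i hi (image_Lm hx hi ▸ mem_image_of_mem _ ht),
    rbPiece_Lm (aC_pos hx hi).ne']

theorem continuousOn_rbOperator (hx : ∀ i < N, x i < x (i + 1))
    (hG : ∀ i, i + 1 < N →
      (α i * G (x N) + q i (x N)) / c i = (α (i + 1) * G (x 0) + q (i + 1) (x 0)) / c (i + 1))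
    (hGc : ContinuousOn G (Icc (x 0) (x N))) (hq : ∀ i < N, ContinuousOn (q i) (Icc (x 0) (x N))) :
    ContinuousOn (rbOperator x N α c q G) (Icc (x 0) (x N)) := by
  refine continuousOn_Icc_of_continuousOn_Icc_succ x N fun i hi => ?_
  have hmaps : MapsTo (fun z => (z - bC x N i) / aC x N i) (Icc (x i) (x (i + 1)))
      (Icc (x 0) (x N)) := by
    rw [← image_Lm hx hi]
    rintro _ ⟨t, ht, rfl⟩
    simpa only [Lm_sub_div (aC_pos hx hi).ne'] using ht
  have hcont : ContinuousOn (fun z => (z - bC x N i) / aC x N i) (Icc (x i) (x (i + 1))) := by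
    fun_prop
  exact (((continuousOn_const.mul (hGc.comp hcont hmaps)).add
    ((hq i hi).comp hcont hmaps)).div_const _).congr (rbOperator_eqOn hx hG i hi)

theorem abs_rbOperator_sub_le (hx : ∀ i < N, x i < x (i + 1)) (hN : 0 < N) {G G' : ℝ → ℝ}
    (hG : ∀ i, i + 1 < N →
      (α i * G (x N) + q i (x N)) / c i = (α (i + 1) * G (x 0) + q (i + 1) (x 0)) / c (i + 1))
    (hG' : ∀ i, i + 1 < N →
      (α i * G' (x N) + q i (x N)) / c i = (α (i + 1) * G' (x 0) + q (i + 1) (x 0)) / c (i + 1))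
    {K D : ℝ} (hK : ∀ i < N, |α i / c i| ≤ K) (hD : ∀ t ∈ Icc (x 0) (x N), |G t - G' t| ≤ D)
    {z : ℝ} (hz : z ∈ Icc (x 0) (x N)) :
    |rbOperator x N α c q G z - rbOperator x N α c q G' z| ≤ K * D := by
  obtain ⟨i, hi, t, ht, rfl⟩ := exists_Lm_eq hx hN hz
  rw [rbOperator_Lm hx hG hi ht, rbOperator_Lm hx hG' hi ht,
    show (α i * G t + q i t) / c i - (α i * G' t + q i t) / c i = α i / c i * (G t - G' t) by ring,
    abs_mul]
  exact mul_le_mul (hK i hi) (hD t ht) (abs_nonneg _) ((abs_nonneg _).trans (hK 0 hN))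

theorem exists_continuous_selfReferential (hx : ∀ i < N, x i < x (i + 1)) (hN : 0 < N)
    (hα : ∀ i < N, |α i| < c i) (hq : ∀ i < N, ContinuousOn (q i) (Icc (x 0) (x N)))
    {y₀ y₁ : ℝ} (hy₀ : (α 0 * y₀ + q 0 (x 0)) / c 0 = y₀)
    (hy₁ : (α (N - 1) * y₁ + q (N - 1) (x N)) / c (N - 1) = y₁)
    (hjoin : ∀ i, i + 1 < N →
      (α i * y₁ + q i (x N)) / c i = (α (i + 1) * y₀ + q (i + 1) (x 0)) / c (i + 1)) :
    ∃ g : ℝ → ℝ, Continuous g ∧ SelfReferential x N α c q g := by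
  have hle : x 0 ≤ x N := (x_zero_lt_x_N hx hN).le
  have h0N : x 0 ≠ x N := (x_zero_lt_x_N hx hN).ne
  set J := Icc (x 0) (x N)
  -- A solution must take these endpoint values, and only for them do the pieces of the
  -- operator agree at the nodes.
  let E : Set C(J, ℝ) := {g | g ⟨x 0, left_mem_Icc.2 hle⟩ = y₀ ∧ g ⟨x N, right_mem_Icc.2 hle⟩ = y₁}
  have hEc : IsClosed E :=
    (isClosed_eq (continuous_eval_const _) continuous_const).inter
      (isClosed_eq (continuous_eval_const _) continuous_const)
  have := hEc.completeSpace_coe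
  have hEne : Nonempty E := by
    refine ⟨⟨⟨fun w => y₀ + (w - x 0) / (x N - x 0) * (y₁ - y₀), by fun_prop⟩, ?_, ?_⟩⟩
    · simp
    · simp [div_self (sub_ne_zero.2 h0N.symm)]
  have hjoinE : ∀ g ∈ E, ∀ i, i + 1 < N → (α i * IccExtend hle g (x N) + q i (x N)) / c i =
      (α (i + 1) * IccExtend hle g (x 0) + q (i + 1) (x 0)) / c (i + 1) := fun g hg => by
    rw [IccExtend_right, IccExtend_left, hg.1, hg.2]
    exact hjoin
  have hT : ∀ g ∈ E, ∀ i < N, ∀ t ∈ J, rbOperator x N α c q (IccExtend hle g) (Lm x N i t) =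
      (α i * IccExtend hle g t + q i t) / c i :=
    fun g hg i hi t ht => rbOperator_Lm hx (hjoinE g hg) hi ht
  have hT₀ : ∀ g ∈ E, rbOperator x N α c q (IccExtend hle g) (x 0) = y₀ := fun g hg => by
    have h := hT g hg 0 hN (x 0) (left_mem_Icc.2 hle)
    rwa [Lm_left h0N, IccExtend_left, hg.1, hy₀] at h
  have hT₁ : ∀ g ∈ E, rbOperator x N α c q (IccExtend hle g) (x N) = y₁ := fun g hg => by
    have h := hT g hg (N - 1) (by omega) (x N) (right_mem_Icc.2 hle)
    rwa [Lm_right h0N, Nat.sub_add_cancel hN, IccExtend_right, hg.2, hy₁] at h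
  let T : E → E := fun g =>
    ⟨⟨J.domRestrict (rbOperator x N α c q (IccExtend hle g)),
      (continuousOn_rbOperator hx (hjoinE g g.2) g.1.continuous.Icc_extend'.continuousOn
        hq).domRestrict⟩, hT₀ g g.2, hT₁ g g.2⟩
  let K : NNReal := (Finset.range N).sup fun i => ‖α i / c i‖₊
  have hK : ∀ i < N, |α i / c i| ≤ K := fun i hi => by
    have h := NNReal.coe_le_coe.2
      (Finset.le_sup (f := fun i => ‖α i / c i‖₊) (Finset.mem_range.2 hi))
    rwa [coe_nnnorm, Real.norm_eq_abs] at h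
  have hK1 : K < 1 := (Finset.sup_lt_iff one_pos).2 fun i hi => by
    have hi := Finset.mem_range.1 hi
    have hc : 0 < c i := (abs_nonneg _).trans_lt (hα i hi)
    rw [← NNReal.coe_lt_coe, coe_nnnorm, Real.norm_eq_abs, NNReal.coe_one, abs_div,
      abs_of_pos hc, div_lt_one hc]
    exact hα i hi
  have hTK : ContractingWith K T := ⟨hK1, LipschitzWith.of_dist_le_mul fun g g' => by
    rw [Subtype.dist_eq, ContinuousMap.dist_le (by positivity)]
    intro w
    refine abs_rbOperator_sub_le hx hN (hjoinE g g.2) (hjoinE g' g'.2) hK (fun t ht => ?_) w.2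
    rw [IccExtend_of_mem hle _ ht, IccExtend_of_mem hle _ ht, ← Real.dist_eq]
    exact ContinuousMap.dist_apply_le_dist _⟩
  obtain ⟨gE, hgE⟩ : ∃ g, T g = g := ⟨_, hTK.fixedPoint_isFixedPt⟩
  refine ⟨IccExtend hle gE.1, gE.1.continuous.Icc_extend', fun i hi t ht => ?_⟩
  calc IccExtend hle gE.1 (Lm x N i t) = (T gE).1 ⟨Lm x N i t, Lm_mem hx hi ht⟩ := by
        rw [hgE]; exact IccExtend_of_mem hle _ _
    _ = _ := hT gE gE.2 i hi t ht

end ReadBajraktarevic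

section Derivative

variable {x : ℕ → ℝ} {N : ℕ}

theorem eqOn_zero_of_selfReferential (hx : ∀ i < N, x i < x (i + 1)) (hN : 0 < N)
    {α c : ℕ → ℝ} (hα : ∀ i < N, |α i| < c i) {e : ℝ → ℝ}
    (he : ContinuousOn e (Icc (x 0) (x N))) (hee : SelfReferential x N α c (fun _ _ => 0) e) :
    EqOn e 0 (Icc (x 0) (x N)) := by
  have hle : x 0 ≤ x N := (x_zero_lt_x_N hx hN).le
  obtain ⟨z, hz, hmax⟩ := isCompact_Icc.exists_isMaxOn (nonempty_Icc.2 hle) he.abs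
  obtain ⟨i, hi, t, ht, rfl⟩ := exists_Lm_eq hx hN hz
  have hc : 0 < c i := (abs_nonneg _).trans_lt (hα i hi)
  have hmax0 : |e (Lm x N i t)| ≤ 0 := by
    have h1 : |e (Lm x N i t)| = |α i| / c i * |e t| := by
      rw [hee i hi t ht, add_zero, abs_div, abs_mul, abs_of_pos hc]
      ring
    have h2 : |e t| ≤ |e (Lm x N i t)| := hmax ht
    have h3 : |α i| / c i < 1 := (div_lt_one hc).2 (hα i hi)
    have h4 : |e (Lm x N i t)| ≤ |α i| / c i * |e (Lm x N i t)| := calc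
      _ = |α i| / c i * |e t| := h1
      _ ≤ _ := mul_le_mul_of_nonneg_left h2 (by positivity)
    nlinarith [abs_nonneg (e (Lm x N i t))]
  exact fun w hw => abs_nonpos_iff.1 ((hmax hw).trans hmax0)

theorem mul_comp_Lm_sub_eq {h g q q' : ℝ → ℝ} {a c : ℝ} {i : ℕ}
    (hh : ∀ z, HasDerivAt h (g z) z)
    (hq : ∀ t ∈ Icc (x 0) (x N), HasDerivWithinAt q (q' t) (Icc (x 0) (x N)) t)
    (hg : ∀ t ∈ Icc (x 0) (x N), c * aC x N i * g (Lm x N i t) = a * g t + q' t) :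
    ∀ t ∈ Icc (x 0) (x N),
      c * h (Lm x N i t) - a * h t - q t = c * h (Lm x N i (x 0)) - a * h (x 0) - q (x 0) := by
  have hD : ∀ t ∈ Icc (x 0) (x N), HasDerivWithinAt (fun t => c * h (Lm x N i t) - a * h t - q t)
      0 (Icc (x 0) (x N)) t := fun t ht => by
    have hL : HasDerivAt (Lm x N i) (aC x N i) t := by
      have := ((hasDerivAt_id t).const_mul (aC x N i)).add_const (bC x N i)
      rwa [mul_one] at this
    have := ((((hh _).comp t hL).const_mul c).sub ((hh t).const_mul a)).hasDerivWithinAt.sub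
      (hq t ht)
    rwa [← mul_assoc, mul_right_comm, hg t ht, add_sub_cancel_left, sub_self] at this
  exact constant_of_has_deriv_right_zero (fun t ht => (hD t ht).continuousWithinAt)
    fun t ht => (hD t (Ico_subset_Icc_self ht)).mono_of_mem_nhdsWithin (Icc_mem_nhdsGE_of_mem ht)

theorem exists_hasDerivWithinAt_of_selfReferential (hx : ∀ i < N, x i < x (i + 1)) (hN : 0 < N)
    {α c : ℕ → ℝ} {q q' : ℕ → ℝ → ℝ} (hα : ∀ i < N, |α i| < c i * aC x N i)
    (hq : ∀ i < N, ∀ t ∈ Icc (x 0) (x N), HasDerivWithinAt (q i) (q' i t) (Icc (x 0) (x N)) t)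
    (hq' : ∀ i < N, ContinuousOn (q' i) (Icc (x 0) (x N)))
    {y₀ y₁ : ℝ} (hy₀ : (α 0 * y₀ + q' 0 (x 0)) / (c 0 * aC x N 0) = y₀)
    (hy₁ : (α (N - 1) * y₁ + q' (N - 1) (x N)) / (c (N - 1) * aC x N (N - 1)) = y₁)
    (hjoin : ∀ i, i + 1 < N → (α i * y₁ + q' i (x N)) / (c i * aC x N i) =
      (α (i + 1) * y₀ + q' (i + 1) (x 0)) / (c (i + 1) * aC x N (i + 1)))
    {f : ℝ → ℝ} (hf : ContinuousOn f (Icc (x 0) (x N))) (hfe : SelfReferential x N α c q f) :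
    ∃ g : ℝ → ℝ, Continuous g ∧
      (∀ t ∈ Icc (x 0) (x N), HasDerivWithinAt f (g t) (Icc (x 0) (x N)) t) ∧
      SelfReferential x N α (fun i => c i * aC x N i) q' g := by
  obtain ⟨g, hg, hge⟩ := exists_continuous_selfReferential hx hN hα hq' hy₀ hy₁ hjoin
  have h0N : x 0 ≠ x N := (x_zero_lt_x_N hx hN).ne
  have hle : x 0 ≤ x N := (x_zero_lt_x_N hx hN).le
  have hc : ∀ i < N, 0 < c i := fun i hi =>
    pos_of_mul_pos_left ((abs_nonneg _).trans_lt (hα i hi)) (aC_pos hx hi).le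
  have hαc : ∀ i < N, |α i / c i| < aC x N i := fun i hi => by
    rw [abs_div, abs_of_pos (hc i hi), div_lt_iff₀ (hc i hi), mul_comm]
    exact hα i hi
  obtain ⟨h, hh, hh₀⟩ : ∃ h : ℝ → ℝ, (∀ z, HasDerivAt h (g z) z) ∧ h (x 0) = f (x 0) :=
    ⟨fun z => f (x 0) + ∫ u in x 0..z, g u,
      fun z => ((hg.integral_hasStrictDerivAt (x 0) z).hasDerivAt).const_add _, by simp⟩
  obtain ⟨e, he⟩ : ∃ e : ℝ → ℝ, ∀ z, e z = h z - f z := ⟨_, fun _ => rfl⟩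
  have hee : ∀ i < N, ∀ t ∈ Icc (x 0) (x N), e (Lm x N i t) = α i / c i * e t + e (x i) := by
    intro i hi t ht
    have hD := mul_comp_Lm_sub_eq hh (hq i hi) (fun s hs => by
      rw [hge i hi s hs, mul_div_cancel₀ _ ((abs_nonneg _).trans_lt (hα i hi)).ne']) t ht
    have hf₁ := hfe i hi t ht
    have hf₀ := hfe i hi (x 0) (left_mem_Icc.2 hle)
    rw [Lm_left h0N] at hD hf₀
    rw [eq_div_iff (hc i hi).ne'] at hf₁ hf₀
    have key : c i * e (Lm x N i t) = α i * e t + c i * e (x i) := by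
      simp only [he]
      linear_combination hD - hf₁ + hf₀ - α i * hh₀
    have := (hc i hi).ne'
    field_simp
    linear_combination key
  have hnodes : ∀ i ≤ N, e (x i) = 0 := by
    refine eq_zero_of_eq_mul_add (u := fun i => e (x i)) (β := fun i => α i / c i) ?_
      (by rw [he, hh₀, sub_self]) fun i hi => ?_
    · calc ∑ i ∈ Finset.range N, |α i / c i| < ∑ i ∈ Finset.range N, aC x N i :=
            Finset.sum_lt_sum_of_nonempty ⟨0, Finset.mem_range.2 hN⟩
              fun i hi => hαc i (Finset.mem_range.1 hi)
        _ = 1 := sum_aC hx hN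
    · simpa only [Lm_right h0N] using hee i hi (x N) (right_mem_Icc.2 hle)
  have hzero : EqOn e 0 (Icc (x 0) (x N)) := by
    refine eqOn_zero_of_selfReferential hx hN
      (fun i hi => (hα i hi).trans_le (mul_le_of_le_one_right (hc i hi).le (aC_le_one hx hi)))
      ?_ fun i hi t ht => ?_
    · exact (ContinuousOn.sub (fun z _ => (hh z).continuousAt.continuousWithinAt) hf).congr
        fun z _ => he z
    · rw [hee i hi t ht, hnodes i hi.le, add_zero, add_zero, mul_div_right_comm]
  have hfh : EqOn f h (Icc (x 0) (x N)) := fun z hz => by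
    have := hzero hz
    rw [he, Pi.zero_apply, sub_eq_zero] at this
    exact this.symm
  exact ⟨g, hg, fun t ht => (hh t).hasDerivWithinAt.congr hfh (hfh ht), hge⟩

theorem iteratedDerivWithin_succ_selfReferential (hx : ∀ i < N, x i < x (i + 1)) (hN : 0 < N)
    {α : ℕ → ℝ} {q : ℕ → ℝ → ℝ} {f : ℝ → ℝ} {r : ℕ} (hα : ∀ i < N, |α i| < aC x N i ^ (r + 1))
    (hq : ∀ i < N, ContDiffOn ℝ (r + 1) (q i) (Icc (x 0) (x N)))
    (hjoin : ∀ i, i + 1 < N →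
      (α i * (iteratedDerivWithin (r + 1) (q (N - 1)) (Icc (x 0) (x N)) (x N) /
            (aC x N (N - 1) ^ (r + 1) - α (N - 1))) +
        iteratedDerivWithin (r + 1) (q i) (Icc (x 0) (x N)) (x N)) / aC x N i ^ (r + 1) =
      (α (i + 1) * (iteratedDerivWithin (r + 1) (q 0) (Icc (x 0) (x N)) (x 0) /
            (aC x N 0 ^ (r + 1) - α 0)) +
        iteratedDerivWithin (r + 1) (q (i + 1)) (Icc (x 0) (x N)) (x 0)) /
          aC x N (i + 1) ^ (r + 1))
    (hf : ContinuousOn (iteratedDerivWithin r f (Icc (x 0) (x N))) (Icc (x 0) (x N)))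
    (hfe : SelfReferential x N α (fun i => aC x N i ^ r)
      (fun i => iteratedDerivWithin r (q i) (Icc (x 0) (x N)))
      (iteratedDerivWithin r f (Icc (x 0) (x N)))) :
    DifferentiableOn ℝ (iteratedDerivWithin r f (Icc (x 0) (x N))) (Icc (x 0) (x N)) ∧
      ContinuousOn (iteratedDerivWithin (r + 1) f (Icc (x 0) (x N))) (Icc (x 0) (x N)) ∧
      SelfReferential x N α (fun i => aC x N i ^ (r + 1))
        (fun i => iteratedDerivWithin (r + 1) (q i) (Icc (x 0) (x N)))
        (iteratedDerivWithin (r + 1) f (Icc (x 0) (x N))) := by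
  have hJ : UniqueDiffOn ℝ (Icc (x 0) (x N)) := uniqueDiffOn_Icc (x_zero_lt_x_N hx hN)
  have hpow : ∀ i, aC x N i ^ r * aC x N i = aC x N i ^ (r + 1) := fun i => (pow_succ _ _).symm
  have hfix : ∀ i < N, ∀ Q : ℝ, Function.IsFixedPt (fun y => (α i * y + Q) / aC x N i ^ (r + 1))
      (Q / (aC x N i ^ (r + 1) - α i)) := fun i hi Q =>
    isFixedPt_div_sub ((abs_nonneg _).trans_lt (hα i hi)).ne'
      (sub_pos.2 (lt_of_abs_lt (hα i hi))).ne'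
  obtain ⟨g, hg, hfg, hge⟩ := exists_hasDerivWithinAt_of_selfReferential hx hN
    (c := fun i => aC x N i ^ r)
    (q' := fun i => iteratedDerivWithin (r + 1) (q i) (Icc (x 0) (x N)))
    (by simpa only [hpow] using hα)
    (fun i hi t ht => by
      rw [iteratedDerivWithin_succ]
      exact ((hq i hi).differentiableOn_iteratedDerivWithin (by norm_cast; omega) hJ t
        ht).hasDerivWithinAt)
    (fun i hi => (hq i hi).continuousOn_iteratedDerivWithin le_rfl hJ)
    (by simp only [hpow]; exact hfix 0 hN _) (by simp only [hpow]; exact hfix (N - 1) (by omega) _)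
    (by simpa only [hpow] using hjoin) hf hfe
  have hfg' : EqOn (iteratedDerivWithin (r + 1) f (Icc (x 0) (x N))) g (Icc (x 0) (x N)) :=
    fun t ht => by rw [iteratedDerivWithin_succ]; exact (hfg t ht).derivWithin (hJ t ht)
  refine ⟨fun t ht => (hfg t ht).differentiableWithinAt, hg.continuousOn.congr hfg',
    fun i hi t ht => ?_⟩
  rw [hfg' (Lm_mem hx hi ht), hfg' ht, hge i hi t ht]
  simp only [hpow]

end Derivative

theorem stmt3_general
    (N k : ℕ) (hN : 2 ≤ N)
    (x : ℕ → ℝ)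
    (hx : ∀ i, i < N → x i < x (i + 1))
    (α : ℕ → ℝ)
    (q : ℕ → ℝ → ℝ)
    (hαk : ∀ i, i < N → |α i| < (aC x N i) ^ k)
    (hq : ∀ i, i < N → ContDiffOn ℝ k (q i) (Icc (x 0) (x N)))
    (hjoin : ∀ i, 1 ≤ i → i < N → ∀ r, 1 ≤ r → r ≤ k →
      (α (i - 1) *
          (iteratedDerivWithin r (q (N - 1)) (Icc (x 0) (x N)) (x N) /
            ((aC x N (N - 1)) ^ r - α (N - 1))) +
        iteratedDerivWithin r (q (i - 1)) (Icc (x 0) (x N)) (x N)) / (aC x N (i - 1)) ^ r =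
      (α i *
          (iteratedDerivWithin r (q 0) (Icc (x 0) (x N)) (x 0) / ((aC x N 0) ^ r - α 0)) +
        iteratedDerivWithin r (q i) (Icc (x 0) (x N)) (x 0)) / (aC x N i) ^ r)
    (f : ℝ → ℝ)
    (hfc : ContinuousOn f (Icc (x 0) (x N)))
    (hfe : ∀ i, i < N → ∀ t ∈ Icc (x 0) (x N), f (Lm x N i t) = α i * f t + q i t) :
    ContDiffOn ℝ k f (Icc (x 0) (x N)) ∧
    ∀ r, 1 ≤ r → r ≤ k → ∀ i, i < N → ∀ t ∈ Icc (x 0) (x N),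
      iteratedDerivWithin r f (Icc (x 0) (x N)) (Lm x N i t) =
        (α i * iteratedDerivWithin r f (Icc (x 0) (x N)) t +
          iteratedDerivWithin r (q i) (Icc (x 0) (x N)) t) / (aC x N i) ^ r := by
  have hN₀ : 0 < N := by omega
  have step := fun r (hr : r < k) =>
    iteratedDerivWithin_succ_selfReferential (f := f) (r := r) hx hN₀
      (fun i hi => (hαk i hi).trans_le
        (pow_le_pow_of_le_one (aC_pos hx hi).le (aC_le_one hx hi) hr))
      (fun i hi => (hq i hi).of_le (by exact_mod_cast hr))
      (fun i hi => by
        simpa only [Nat.add_sub_cancel] using hjoin (i + 1) (by omega) hi (r + 1) (by omega) hr)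
  have main : ∀ r ≤ k, ContinuousOn (iteratedDerivWithin r f (Icc (x 0) (x N))) (Icc (x 0) (x N)) ∧
      SelfReferential x N α (fun i => aC x N i ^ r)
        (fun i => iteratedDerivWithin r (q i) (Icc (x 0) (x N)))
        (iteratedDerivWithin r f (Icc (x 0) (x N))) := by
    intro r hr
    induction r with
    | zero => exact ⟨by simpa using hfc, fun i hi t ht => by simpa using hfe i hi t ht⟩
    | succ r ih => exact (step r hr (ih (by omega)).1 (ih (by omega)).2).2
  refine ⟨(contDiffOn_nat_iff_continuousOn_differentiableOn_deriv
    (uniqueDiffOn_Icc (x_zero_lt_x_N hx hN₀))).2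
      ⟨fun m hm => (main m hm).1, fun m hm => (step m hm (main m hm.le).1 (main m hm.le).2).1⟩,
    fun r _ hr => (main r hr).2⟩

/-- If `|α i| < a i ^ k`, `q i ∈ C^k(I)`, the endpoint conditions hold and the derivative
join-up conditions hold, then the fractal interpolation function is `C^k` and its `r`-th
derivative satisfies the self-referential equation with maps `F_{i,r}`. -/
theorem stmt3
    (N k : ℕ) (hN : 2 ≤ N) (hk : 1 ≤ k)
    (x y : ℕ → ℝ)
    (hx : ∀ i, i < N → x i < x (i + 1))
    (α : ℕ → ℝ) (hα : ∀ i, i < N → |α i| < 1)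
    (q : ℕ → ℝ → ℝ)
    (hαk : ∀ i, i < N → |α i| < (aC x N i) ^ k)
    (hq : ∀ i, i < N → ContDiffOn ℝ k (q i) (Icc (x 0) (x N)))
    (hq0 : ∀ i, i < N → q i (x 0) = y i - α i * y 0)
    (hqN : ∀ i, i < N → q i (x N) = y (i + 1) - α i * y N)
    (hjoin : ∀ i, 1 ≤ i → i < N → ∀ r, 1 ≤ r → r ≤ k →
      (α (i - 1) *
          (iteratedDerivWithin r (q (N - 1)) (Icc (x 0) (x N)) (x N) /
            ((aC x N (N - 1)) ^ r - α (N - 1))) +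
        iteratedDerivWithin r (q (i - 1)) (Icc (x 0) (x N)) (x N)) / (aC x N (i - 1)) ^ r =
      (α i *
          (iteratedDerivWithin r (q 0) (Icc (x 0) (x N)) (x 0) / ((aC x N 0) ^ r - α 0)) +
        iteratedDerivWithin r (q i) (Icc (x 0) (x N)) (x 0)) / (aC x N i) ^ r)
    (f : ℝ → ℝ)
    (hfc : ContinuousOn f (Icc (x 0) (x N)))
    (hfe : ∀ i, i < N → ∀ t ∈ Icc (x 0) (x N), f (Lm x N i t) = α i * f t + q i t) :
    ContDiffOn ℝ k f (Icc (x 0) (x N)) ∧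
    ∀ r, 1 ≤ r → r ≤ k → ∀ i, i < N → ∀ t ∈ Icc (x 0) (x N),
      iteratedDerivWithin r f (Icc (x 0) (x N)) (Lm x N i t) =
        (α i * iteratedDerivWithin r f (Icc (x 0) (x N)) t +
          iteratedDerivWithin r (q i) (Icc (x 0) (x N)) t) / (aC x N i) ^ r :=
  stmt3_general N k hN x hx α q hαk hq hjoin f hfc hfe
end
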